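/- Let p be an odd prime, q ∈ ℂ_p with |1−q|_p < 1, and f : ℤ_p → ℂ_p uniformly differentiable. Let w ∈ ℂ_p with |1−w|_p < 1 and define μ^{(w)}_{f,−q}(a + p^n ℤ_p) = ∫_{a+p^n ℤ_p} w^ξ f(ξ) dμ_{−q}(ξ) (the fermionic p-adic q-integral restricted to the ball a + p^n ℤ_p). Then there exists a constant C > 0 such that for all n ≥ 0 and all a with 0 ≤ a < p^n: |[p^n]_{−q} μ^{(w)}_{f,−q}(a + p^n ℤ_p) − [p^{n+1}]_{−q} μ^{(w)}_{f,−q}(a + p^{n+1} ℤ_p)|_p ≤ C·p^{−n}. -/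

import Mathlib

open Filter Finset

/-!
Write `g(ξ) = w^ξ f(ξ)`. Splitting the level-`n` Riemann sum into the blocks `x + r pⁿ`, `r < p`, and
using `[pⁿ⁺¹]_{-q} = [pⁿ]_{-q} ∑_{r<p} (-q)^{r pⁿ}`, the difference of the two scaled Riemann sums is
`[pⁿ]_{-q} ∑_x (-q)^x ∑_{r<p} (-q)^{r pⁿ} (g(x + r pⁿ) - g(x))`. Every `q`-factor has norm one
(`p` odd gives `‖1 + q‖ = ‖2‖ = 1`), so by the ultrametric inequality the difference, and then its
limit as `m → ∞` (where `‖[pᵐ]_{-q}‖ = 1`), is bounded by `sup ‖g(x + r pⁿ) - g(x)‖ = O(p⁻ⁿ)`.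
The last bound combines the Lipschitz bound on `f` with `‖w^{pⁿ} - 1‖ = O(p⁻ⁿ)`, which follows from
`‖z^p - 1‖ ≤ ‖z - 1‖ max(p⁻¹, ‖z - 1‖)`: once `‖z - 1‖ ≤ p⁻¹`, raising to the `p`-th power
contracts by `p⁻¹`.
-/

section Ultrametric

open IsUltrametricDist

variable {K : Type*} [NormedField K] [IsUltrametricDist K]

theorem norm_add_eq_left_of_norm_lt {a b : K} (h : ‖b‖ < ‖a‖) : ‖a + b‖ = ‖a‖ := by
  rw [norm_add_eq_max_of_norm_ne_norm h.ne', max_eq_left h.le]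

theorem norm_eq_one_of_norm_sub_one_lt_one {z : K} (hz : ‖z - 1‖ < 1) : ‖z‖ = 1 := by
  simpa using norm_add_eq_left_of_norm_lt (a := (1 : K)) (b := z - 1) (by simpa using hz)

theorem norm_two_eq_one_of_odd {p : ℕ} (hp : Odd p) (hpK : ‖(p : K)‖ < 1) : ‖(2 : K)‖ = 1 := by
  refine le_antisymm (by simpa using norm_natCast_le_one K 2) (not_lt.1 fun h2 => ?_)
  obtain ⟨k, rfl⟩ := hp
  have h2k : ‖-(2 * k : K)‖ < 1 := by
    rw [norm_neg, norm_mul]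
    exact mul_lt_one_of_nonneg_of_lt_one_left (norm_nonneg _) h2 (norm_natCast_le_one K k)
  have h1 : ((2 * k + 1 : ℕ) : K) + -(2 * k : K) = 1 := by push_cast; ring
  simpa [h1] using (norm_add_le_max _ _).trans_lt (max_lt hpK h2k)

theorem norm_one_add_eq_one {z : K} (h2 : ‖(2 : K)‖ = 1) (hz : ‖z - 1‖ < 1) : ‖1 + z‖ = 1 := by
  rw [show 1 + z = 2 + (z - 1) by ring, norm_add_eq_left_of_norm_lt (h2 ▸ hz), h2]

theorem norm_pow_sub_one_le {z : K} (hz : ‖z‖ ≤ 1) (n : ℕ) : ‖z ^ n - 1‖ ≤ ‖z - 1‖ := by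
  rw [← geom_sum_mul, norm_mul]
  refine mul_le_of_le_one_left (norm_nonneg _) ?_
  exact norm_sum_le_of_forall_le_of_nonneg zero_le_one fun i _ => by
    simpa using pow_le_one₀ (norm_nonneg z) hz

theorem norm_pow_sub_one_le_mul_max {z : K} (hz : ‖z‖ ≤ 1) (n : ℕ) :
    ‖z ^ n - 1‖ ≤ ‖z - 1‖ * max ‖(n : K)‖ ‖z - 1‖ := by
  have hsum : ∑ i ∈ range n, z ^ i = ∑ i ∈ range n, (z ^ i - 1) + n := by simp
  rw [← geom_sum_mul, norm_mul, mul_comm, hsum]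
  gcongr
  refine (norm_add_le_max _ _).trans (max_le ?_ (le_max_left _ _))
  exact (norm_sum_le_of_forall_le_of_nonneg (norm_nonneg _)
    fun i _ => norm_pow_sub_one_le hz i).trans (le_max_right _ _)

theorem norm_pow_pow_sub_one_le {z : K} {n : ℕ} (hz : ‖z - 1‖ ≤ ‖(n : K)‖) (k : ℕ) :
    ‖z ^ n ^ k - 1‖ ≤ ‖(n : K)‖ ^ k * ‖z - 1‖ := by
  have hz1 : ‖z‖ ≤ 1 := by
    simpa using (norm_add_le_max 1 (z - 1)).trans
      (max_le (by simp) (hz.trans (norm_natCast_le_one K n)))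
  induction k with
  | zero => simp
  | succ k ih =>
    have hzk : ‖z ^ n ^ k - 1‖ ≤ ‖(n : K)‖ := (norm_pow_sub_one_le hz1 _).trans hz
    calc ‖z ^ n ^ (k + 1) - 1‖ = ‖(z ^ n ^ k) ^ n - 1‖ := by rw [pow_succ, pow_mul]
      _ ≤ ‖z ^ n ^ k - 1‖ * ‖(n : K)‖ := by
        simpa [max_eq_left hzk] using
          norm_pow_sub_one_le_mul_max (z := z ^ n ^ k)
            (by simpa using pow_le_one₀ (norm_nonneg z) hz1) n
      _ ≤ ‖(n : K)‖ ^ (k + 1) * ‖z - 1‖ := by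
        rw [pow_succ]; nlinarith [norm_nonneg (n : K)]

theorem exists_norm_pow_pow_sub_one_le {z : K} {n : ℕ} (hz : ‖z - 1‖ < 1) (hn0 : 0 < ‖(n : K)‖)
    (hn : ‖(n : K)‖ < 1) : ∃ N, ‖z ^ n ^ N - 1‖ ≤ ‖(n : K)‖ := by
  set ρ := max ‖(n : K)‖ ‖z - 1‖
  have hz1 : ‖z‖ ≤ 1 := (norm_eq_one_of_norm_sub_one_lt_one hz).le
  have hgeom : ∀ k, ‖z ^ n ^ k - 1‖ ≤ ρ ^ (k + 1) := by
    intro k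
    induction k with
    | zero => simp [ρ]
    | succ k ih =>
      calc ‖z ^ n ^ (k + 1) - 1‖ = ‖(z ^ n ^ k) ^ n - 1‖ := by rw [pow_succ, pow_mul]
        _ ≤ ‖z ^ n ^ k - 1‖ * max ‖(n : K)‖ ‖z ^ n ^ k - 1‖ :=
          norm_pow_sub_one_le_mul_max (z := z ^ n ^ k)
            (by simpa using pow_le_one₀ (norm_nonneg z) hz1) n
        _ ≤ ρ ^ (k + 1) * ρ := by
          gcongr
          exact max_le_max le_rfl (norm_pow_sub_one_le hz1 _)
  obtain ⟨N, hN⟩ := exists_pow_lt_of_lt_one hn0 (max_lt hn hz)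
  refine ⟨N, (hgeom N).trans ?_⟩
  exact (pow_le_pow_of_le_one (by positivity) (max_lt hn hz).le N.le_succ).trans hN.le

theorem exists_norm_pow_pow_sub_one_le_mul {z : K} {n : ℕ} (hz : ‖z - 1‖ < 1)
    (hn0 : 0 < ‖(n : K)‖) (hn : ‖(n : K)‖ < 1) :
    ∃ C, ∀ k, ‖z ^ n ^ k - 1‖ ≤ C * ‖(n : K)‖ ^ k := by
  obtain ⟨N, hN⟩ := exists_norm_pow_pow_sub_one_le hz hn0 hn
  refine ⟨(‖(n : K)‖ ^ N)⁻¹, fun k => ?_⟩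
  rcases lt_or_ge k N with hk | hk
  · calc ‖z ^ n ^ k - 1‖ ≤ 1 :=
          (norm_pow_sub_one_le (norm_eq_one_of_norm_sub_one_lt_one hz).le _).trans hz.le
      _ ≤ (‖(n : K)‖ ^ N)⁻¹ * ‖(n : K)‖ ^ k := by
        rw [inv_mul_eq_div, one_le_div (by positivity)]
        exact pow_le_pow_of_le_one hn0.le hn.le hk.le
  · obtain ⟨j, rfl⟩ := Nat.exists_eq_add_of_le hk
    calc ‖z ^ n ^ (N + j) - 1‖ = ‖(z ^ n ^ N) ^ n ^ j - 1‖ := by rw [pow_add, pow_mul]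
      _ ≤ ‖(n : K)‖ ^ j * ‖z ^ n ^ N - 1‖ := norm_pow_pow_sub_one_le hN j
      _ ≤ ‖(n : K)‖ ^ j := mul_le_of_le_one_right (by positivity) (hN.trans hn.le)
      _ = (‖(n : K)‖ ^ N)⁻¹ * ‖(n : K)‖ ^ (N + j) := by
        rw [pow_add, inv_mul_cancel_left₀ (by positivity)]

end Ultrametric

theorem sum_range_mul_eq_sum_sum {M : Type*} [AddCommMonoid M] (G : ℕ → M) (b c : ℕ) :
    ∑ i ∈ range (b * c), G i = ∑ j ∈ range c, ∑ r ∈ range b, G (b * j + r) := by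
  induction c with
  | zero => simp
  | succ c ih => rw [Nat.mul_succ, sum_range_add, ih, sum_range_succ]

section QNumber

variable {K : Type*} [Field K]

/-- The `q`-number `[k]_{-q}`. -/
def negQNum (q : K) (k : ℕ) : K := (1 - (-q) ^ k) / (1 + q)

/-- The Riemann sum `∑ g(ξ) (-q)^ξ` over `0 ≤ ξ < pᵐ`, `ξ ≡ a mod pⁿ`, whose limit after
division by `[pᵐ]_{-q}` is the fermionic integral of `g` over `a + pⁿℤ_p`. -/
def fermionicSum (p : ℕ) (q : K) (g : ℕ → K) (n a m : ℕ) : K :=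
  ∑ i ∈ range (p ^ (m - n)), g (a + i * p ^ n) * (-q) ^ (a + i * p ^ n)

theorem negQNum_mul (q : K) (N P : ℕ) :
    negQNum q (N * P) = negQNum q N * ∑ r ∈ range P, ((-q) ^ N) ^ r := by
  rw [negQNum, negQNum, pow_mul, ← mul_neg_geom_sum]
  ring

theorem negQNum_mul_sum_sub (q : K) (g : ℕ → K) (x N P : ℕ) :
    negQNum q N * ∑ r ∈ range P, g (x + r * N) * (-q) ^ (x + r * N) -
        negQNum q (N * P) * (g x * (-q) ^ x) =
      negQNum q N * (-q) ^ x * ∑ r ∈ range P, ((-q) ^ N) ^ r * (g (x + r * N) - g x) := by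
  simp only [negQNum_mul, mul_sum, sum_mul, ← sum_sub_distrib]
  refine sum_congr rfl fun r _ => ?_
  rw [pow_add, mul_comm r N, pow_mul]
  ring

theorem fermionicSum_eq_sum_sum (p : ℕ) (q : K) (g : ℕ → K) {n m : ℕ} (hnm : n < m) (a : ℕ) :
    fermionicSum p q g n a m = ∑ j ∈ range (p ^ (m - (n + 1))), ∑ r ∈ range p,
      g (a + j * p ^ (n + 1) + r * p ^ n) * (-q) ^ (a + j * p ^ (n + 1) + r * p ^ n) := by
  rw [fermionicSum, show m - n = m - (n + 1) + 1 by omega, pow_succ', sum_range_mul_eq_sum_sum]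
  refine sum_congr rfl fun j _ => sum_congr rfl fun r _ => ?_
  rw [show a + (p * j + r) * p ^ n = a + j * p ^ (n + 1) + r * p ^ n by ring]

end QNumber

section NegQNumNorm

open IsUltrametricDist

variable {K : Type*} [NormedField K] [IsUltrametricDist K]

theorem norm_negQNum_pow_eq_one {p : ℕ} (hp : Odd p) (hpK : ‖(p : K)‖ < 1) {q : K}
    (hq : ‖q - 1‖ < 1) (k : ℕ) : ‖negQNum q (p ^ k)‖ = 1 := by
  have h2 := norm_two_eq_one_of_odd hp hpK
  have hqk : ‖q ^ p ^ k - 1‖ < 1 :=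
    (norm_pow_sub_one_le (norm_eq_one_of_norm_sub_one_lt_one hq).le _).trans_lt hq
  rw [negQNum, hp.pow.neg_pow, sub_neg_eq_add, norm_div, norm_one_add_eq_one h2 hqk,
    norm_one_add_eq_one h2 hq, div_one]

theorem norm_negQNum_mul_fermionicSum_sub_le {p : ℕ} {q : K} (hq : ‖q‖ ≤ 1) {g : ℕ → K}
    {n m : ℕ} (hnm : n < m) (hqn : ‖negQNum q (p ^ n)‖ ≤ 1) {δ : ℝ}
    (hg : ∀ x r, ‖g (x + r * p ^ n) - g x‖ ≤ δ) (a : ℕ) :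
    ‖negQNum q (p ^ n) * fermionicSum p q g n a m -
        negQNum q (p ^ (n + 1)) * fermionicSum p q g (n + 1) a m‖ ≤ δ := by
  have hδ : 0 ≤ δ := (norm_nonneg _).trans (hg 0 0)
  have hpow : ∀ k, ‖(-q) ^ k‖ ≤ 1 := fun k => by simpa using pow_le_one₀ (norm_nonneg q) hq
  rw [fermionicSum_eq_sum_sum p q g hnm, fermionicSum, mul_sum, mul_sum, ← sum_sub_distrib]
  refine norm_sum_le_of_forall_le_of_nonneg hδ fun j _ => ?_
  rw [pow_succ, negQNum_mul_sum_sub, norm_mul]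
  refine mul_le_of_le_one_left (norm_nonneg _) ((norm_mul_le _ _).trans
    (mul_le_one₀ hqn (norm_nonneg _) (hpow _))) |>.trans ?_
  refine norm_sum_le_of_forall_le_of_nonneg hδ fun r _ => ?_
  rw [norm_mul, ← pow_mul]
  exact mul_le_of_le_one_left (norm_nonneg _) (hpow _) |>.trans (hg _ r)

end NegQNumNorm

section PadicLipschitz

open IsUltrametricDist

variable {p : ℕ} [Fact p.Prime] {K : Type*} [NormedField K] [IsUltrametricDist K]
  {f : ℤ_[p] → K} {M : ℝ}

theorem norm_apply_le_max_of_norm_sub_le (hf : ∀ x m : ℤ_[p], ‖f (x + m) - f x‖ ≤ M * ‖m‖)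
    (x : ℤ_[p]) : ‖f x‖ ≤ max ‖f 0‖ M := by
  have hM : 0 ≤ M := by simpa using (norm_nonneg _).trans (hf 0 1)
  calc ‖f x‖ = ‖f 0 + (f (0 + x) - f 0)‖ := by rw [zero_add, add_sub_cancel]
    _ ≤ max ‖f 0‖ (M * ‖x‖) := (norm_add_le_max _ _).trans (max_le_max le_rfl (hf 0 x))
    _ ≤ max ‖f 0‖ M := max_le_max le_rfl (mul_le_of_le_one_right hM (PadicInt.norm_le_one x))

theorem norm_pow_mul_apply_add_sub_le {w : K} (hw : ‖w‖ ≤ 1)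
    (hf : ∀ x m : ℤ_[p], ‖f (x + m) - f x‖ ≤ M * ‖m‖) {B : ℝ} (hB : ∀ x, ‖f x‖ ≤ B)
    (x r n : ℕ) :
    ‖w ^ (x + r * p ^ n) * f ↑(x + r * p ^ n) - w ^ x * f ↑x‖ ≤
      max (M * (p : ℝ) ^ (-(n : ℤ))) (‖w ^ p ^ n - 1‖ * B) := by
  have hM : 0 ≤ M := by simpa using (norm_nonneg _).trans (hf 0 1)
  have hwpow : ∀ k, ‖w ^ k‖ ≤ 1 := fun k => by simpa using pow_le_one₀ (norm_nonneg w) hw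
  have hmesh : ‖((r * p ^ n : ℕ) : ℤ_[p])‖ ≤ (p : ℝ) ^ (-(n : ℤ)) := by
    rw [Nat.cast_mul, Nat.cast_pow, ← PadicInt.norm_p_pow]
    exact (norm_mul_le _ _).trans (mul_le_of_le_one_left (norm_nonneg _) (PadicInt.norm_le_one _))
  have hsplit : w ^ (x + r * p ^ n) * f ↑(x + r * p ^ n) - w ^ x * f ↑x =
      w ^ x * (w ^ (r * p ^ n) * (f (↑x + ↑(r * p ^ n)) - f ↑x) +
        (w ^ (r * p ^ n) - 1) * f ↑x) := by
    rw [← Nat.cast_add, pow_add]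
    ring
  rw [hsplit, norm_mul]
  refine (mul_le_of_le_one_left (norm_nonneg _) (hwpow x)).trans ?_
  refine (norm_add_le_max _ _).trans (max_le_max ?_ ?_)
  · rw [norm_mul]
    exact (mul_le_of_le_one_left (norm_nonneg _) (hwpow _)).trans ((hf _ _).trans (by gcongr))
  · rw [norm_mul, mul_comm r, pow_mul]
    exact mul_le_mul (norm_pow_sub_one_le (hwpow _) r) (hB _) (norm_nonneg _)
      ((norm_nonneg _).trans (norm_pow_sub_one_le (hwpow _) r))

theorem exists_norm_pow_mul_apply_add_sub_le (hpK : ‖(p : K)‖ = (p : ℝ)⁻¹) {w : K}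
    (hw : ‖w - 1‖ < 1) (hf : ∀ x m : ℤ_[p], ‖f (x + m) - f x‖ ≤ M * ‖m‖) :
    ∃ C, 0 < C ∧ ∀ n x r : ℕ,
      ‖w ^ (x + r * p ^ n) * f ↑(x + r * p ^ n) - w ^ x * f ↑x‖ ≤ C * (p : ℝ) ^ (-(n : ℤ)) := by
  have hp1 : (1 : ℝ) < p := by exact_mod_cast (Fact.out : p.Prime).one_lt
  have hpn : ∀ n : ℕ, ‖(p : K)‖ ^ n = (p : ℝ) ^ (-(n : ℤ)) := fun n => by
    rw [hpK, inv_pow, zpow_neg, zpow_natCast]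
  obtain ⟨Cw, hCw⟩ := exists_norm_pow_pow_sub_one_le_mul hw (by rw [hpK]; positivity)
    (by rw [hpK]; exact inv_lt_one_of_one_lt₀ hp1)
  set B := max ‖f 0‖ M
  refine ⟨max 1 (max M (Cw * B)), lt_max_of_lt_left one_pos, fun n x r => ?_⟩
  refine (norm_pow_mul_apply_add_sub_le (norm_eq_one_of_norm_sub_one_lt_one hw).le hf
    (norm_apply_le_max_of_norm_sub_le hf) x r n).trans (max_le ?_ ?_)
  · gcongr
    exact (le_max_left _ _).trans (le_max_right _ _)
  · calc ‖w ^ p ^ n - 1‖ * B ≤ Cw * (p : ℝ) ^ (-(n : ℤ)) * B := by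
          rw [← hpn]
          exact mul_le_mul_of_nonneg_right (hCw n) (le_max_of_le_left (norm_nonneg _))
      _ ≤ max 1 (max M (Cw * B)) * (p : ℝ) ^ (-(n : ℤ)) := by
          rw [mul_right_comm]
          gcongr
          exact (le_max_right _ _).trans (le_max_right _ _)

end PadicLipschitz

/-- the weighted measure `μ^{(w)}_{f,-q}(a + pⁿℤ_p)`, defined as the limit of
the Riemann sums of the fermionic `p`-adic `q`-integral of `w^ξ f(ξ)` over the ball
`a + pⁿℤ_p`, is a strongly weighted measure: there is `C > 0` with
`‖[pⁿ]_{-q} μ(a + pⁿℤ_p) - [pⁿ⁺¹]_{-q} μ(a + pⁿ⁺¹ℤ_p)‖ ≤ C·p⁻ⁿ` for all `n` and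
`0 ≤ a < pⁿ`. Here `[x]_{-q} = (1 - (-q)ˣ)/(1 + q)`. -/
theorem weighted_measure_strongly_invariant (p : ℕ) [Fact p.Prime] (hodd : p ≠ 2)
    (K : Type*) [NontriviallyNormedField K] [IsUltrametricDist K]
    (hpK : ‖(p : K)‖ = (p : ℝ)⁻¹)
    (q w : K) (hq : ‖1 - q‖ < 1) (hw : ‖1 - w‖ < 1)
    (f : ℤ_[p] → K) (hf : ∃ M : ℝ, ∀ x m : ℤ_[p], ‖f (x + m) - f x‖ ≤ M * ‖m‖)
    (μ : ℕ → ℕ → K)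
    (hμ : ∀ n a : ℕ, Filter.Tendsto (fun m : ℕ =>
        (1 / ((1 - (-q) ^ (p ^ m)) / (1 + q))) *
          ∑ i ∈ range (p ^ (m - n)),
            w ^ (a + i * p ^ n) * f ((a + i * p ^ n : ℕ) : ℤ_[p]) *
              (-q) ^ (a + i * p ^ n)) atTop (nhds (μ n a))) :
    ∃ C : ℝ, 0 < C ∧ ∀ n a : ℕ, a < p ^ n →
      ‖((1 - (-q) ^ (p ^ n)) / (1 + q)) * μ n a -
          ((1 - (-q) ^ (p ^ (n + 1))) / (1 + q)) * μ (n + 1) a‖ ≤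
        C * (p : ℝ) ^ (-(n : ℤ)) := by
  have hp : Odd p := Nat.Prime.odd_of_ne_two Fact.out hodd
  have hpK1 : ‖(p : K)‖ < 1 := by
    rw [hpK]; exact inv_lt_one_of_one_lt₀ (by exact_mod_cast (Fact.out : p.Prime).one_lt)
  rw [norm_sub_rev] at hq hw
  obtain ⟨M, hf⟩ := hf
  obtain ⟨C, hC, hg⟩ := exists_norm_pow_mul_apply_add_sub_le hpK hw hf
  refine ⟨C, hC, fun n a _ => ?_⟩
  have hLim : ∀ n a, Tendsto (fun m => 1 / negQNum q (p ^ m) *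
      fermionicSum p q (fun ξ => w ^ ξ * f ξ) n a m) atTop (nhds (μ n a)) := hμ
  show ‖negQNum q (p ^ n) * μ n a - negQNum q (p ^ (n + 1)) * μ (n + 1) a‖ ≤ _
  refine le_of_tendsto (((hLim n a).const_mul _).sub ((hLim (n + 1) a).const_mul _)).norm ?_
  filter_upwards [eventually_gt_atTop n] with m hm
  rw [mul_left_comm, mul_left_comm (negQNum q _), ← mul_sub, norm_mul, norm_div, norm_one,
    norm_negQNum_pow_eq_one hp hpK1 hq, div_one, one_mul]
  exact norm_negQNum_mul_fermionicSum_sub_le (norm_eq_one_of_norm_sub_one_lt_one hq).le hm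
    (norm_negQNum_pow_eq_one hp hpK1 hq n).le (hg n) a
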